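/- Define IKM(a,b;n) = ∫_0^∞ [I_0(t)]^a [K_0(t)]^b t^n dt. Then IKM(0,5;5) = (76/15)·IKM(0,5;3) − (16/45)·IKM(0,5;1) + 8/15. -/

import Mathlib

open MeasureTheory Real

/-- Modified Bessel function of the first kind, order zero. -/
noncomputable def I0 (t : ℝ) : ℝ := (1/π) * ∫ θ in (0:ℝ)..π, Real.exp (t * Real.cos θ)

/-- Modified Bessel function of the second kind, order zero. -/
noncomputable def K0 (t : ℝ) : ℝ := ∫ u in Set.Ioi (0:ℝ), Real.exp (-t * Real.cosh u)

/-- Modified Bessel function of the first kind, order one: `I₁ = I₀'`. -/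
noncomputable def I1 (t : ℝ) : ℝ := deriv I0 t

/-- Modified Bessel function of the second kind, order one: `K₁ = -K₀'`. -/
noncomputable def K1 (t : ℝ) : ℝ := -deriv K0 t

/-- The Bessel moment `IKM(a,b;n) = ∫₀^∞ I₀(t)^a K₀(t)^b tⁿ dt`. -/
noncomputable def IKM (a b n : ℕ) : ℝ :=
  ∫ t in Set.Ioi (0:ℝ), (I0 t)^a * (K0 t)^b * t^n

open Set Filter Topology
open scoped Nat

/-!
With `K₀' = -K₁` and `K₁' = -K₀ - K₁ / t` (the latter by an integration by parts in the
representation `K₁(t) = ∫₀^∞ cosh u e^{-t cosh u} du`), the polynomial `ikm055Primitive` in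
`t, K₀, K₁` is an antiderivative of `(t⁵ - 76/15 t³ + 16/45 t) K₀⁵`. It tends to `0` at infinity,
where `K₀` and `K₁` decay like `e^{-t}`, and to `-8/15` at `0`, where `t K₁ → 1` while `K₀` grows
only logarithmically. Integrating over `(0, ∞)` gives the relation.
-/

theorem integral_Ioi_of_hasDerivAt_of_tendsto_nhdsGT {E : Type*} [NormedAddCommGroup E]
    [NormedSpace ℝ E] [CompleteSpace E] {f f' : ℝ → E} {a : ℝ} {fa fb : E}
    (hderiv : ∀ x ∈ Ioi a, HasDerivAt f (f' x) x) (hint : IntegrableOn f' (Ioi a))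
    (hzero : Tendsto f (𝓝[>] a) (𝓝 fa)) (htop : Tendsto f atTop (𝓝 fb)) :
    ∫ x in Ioi a, f' x = fb - fa := by
  rw [← Ici_sdiff_left] at hzero
  set g := Function.update f a fa
  have hderiv' : ∀ x ∈ Ioi a, HasDerivAt g (f' x) x := fun x (hx : a < x) =>
    (hderiv x hx).congr_of_eventuallyEq <| by
      filter_upwards [eventually_ne_nhds hx.ne'] with y hy using Function.update_of_ne hy fa f
  have htop' : Tendsto g atTop (𝓝 fb) := htop.congr' <| by
    filter_upwards [eventually_ne_atTop a] with x hx using (Function.update_of_ne hx fa f).symm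
  simpa [g] using integral_Ioi_of_hasDerivAt_of_tendsto
    (continuousWithinAt_update_same.mpr hzero) hderiv' hint htop'

lemma self_le_cosh {u : ℝ} (hu : 0 ≤ u) : u ≤ cosh u :=
  (self_le_sinh_iff.2 hu).trans (sinh_lt_cosh u).le

lemma abs_sinh_le_cosh (u : ℝ) : |sinh u| ≤ cosh u := by
  rw [abs_sinh, ← cosh_abs]
  exact (sinh_lt_cosh _).le

lemma pow_le_factorial_mul_exp {x : ℝ} (hx : 0 ≤ x) (m : ℕ) : x ^ m ≤ m ! * exp x := by
  have := pow_div_factorial_le_exp (x := x) hx m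
  rwa [div_le_iff₀ (by positivity), mul_comm] at this

noncomputable def coshMoment (m : ℕ) (t : ℝ) : ℝ :=
  ∫ u in Ioi 0, cosh u ^ m * exp (-t * cosh u)

section coshMoment

variable (m : ℕ) {t : ℝ}

lemma cosh_pow_mul_exp_le (ht : 0 < t) {u : ℝ} (hu : 0 ≤ u) :
    cosh u ^ m * exp (-t * cosh u) ≤ m ! * (2 / t) ^ m * exp (-(t / 2) * u) := by
  have hpow := pow_le_factorial_mul_exp (x := t / 2 * cosh u) (by positivity) m
  calc cosh u ^ m * exp (-t * cosh u)
      = (2 / t) ^ m * (t / 2 * cosh u) ^ m * exp (-t * cosh u) := by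
        rw [← mul_pow, ← mul_assoc, div_mul_div_comm, mul_comm 2 t, div_self (by positivity),
          one_mul]
    _ ≤ (2 / t) ^ m * (m ! * exp (t / 2 * cosh u)) * exp (-t * cosh u) := by gcongr
    _ = m ! * (2 / t) ^ m * exp (-(t / 2) * cosh u) := by
        rw [mul_assoc, mul_assoc, ← exp_add]; ring_nf
    _ ≤ m ! * (2 / t) ^ m * exp (-(t / 2) * u) := by
        gcongr m ! * (2 / t) ^ m * ?_
        exact exp_le_exp.2 (by nlinarith [self_le_cosh hu])

lemma integrableOn_cosh_pow_mul_exp (ht : 0 < t) :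
    IntegrableOn (fun u => cosh u ^ m * exp (-t * cosh u)) (Ioi 0) := by
  refine Integrable.mono' ((exp_neg_integrableOn_Ioi 0 (half_pos ht)).const_mul
    (m ! * (2 / t) ^ m)) (by fun_prop) ?_
  filter_upwards [ae_restrict_mem measurableSet_Ioi] with u hu
  rw [norm_of_nonneg (by positivity)]
  exact cosh_pow_mul_exp_le m ht (le_of_lt hu)

lemma coshMoment_nonneg : 0 ≤ coshMoment m t :=
  setIntegral_nonneg measurableSet_Ioi fun _ _ => by positivity

lemma hasDerivAt_coshMoment (ht : 0 < t) :
    HasDerivAt (coshMoment m) (-coshMoment (m + 1) t) t := by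
  have key := hasDerivAt_integral_of_dominated_loc_of_deriv_le
    (μ := volume.restrict (Ioi 0)) (x₀ := t)
    (F := fun x u => cosh u ^ m * exp (-x * cosh u))
    (F' := fun x u => -(cosh u ^ (m + 1) * exp (-x * cosh u)))
    (bound := fun u => (m + 1)! * (2 / (t / 2)) ^ (m + 1) * exp (-(t / 2 / 2) * u))
    (Metric.ball_mem_nhds t (half_pos ht)) (Eventually.of_forall fun _ => by fun_prop)
    (integrableOn_cosh_pow_mul_exp m ht) (by fun_prop) ?_
    ((exp_neg_integrableOn_Ioi 0 (by positivity)).const_mul _) ?_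
  · simp only [integral_neg] at key
    exact key.2
  · filter_upwards [ae_restrict_mem measurableSet_Ioi] with u hu x hx_ball
    have hx : t / 2 < x := by
      have := (abs_lt.1 (Metric.mem_ball.1 hx_ball)).1
      linarith
    rw [norm_neg, norm_of_nonneg (by positivity)]
    calc cosh u ^ (m + 1) * exp (-x * cosh u)
        ≤ cosh u ^ (m + 1) * exp (-(t / 2) * cosh u) := by
          gcongr cosh u ^ (m + 1) * ?_
          exact exp_le_exp.2 (by nlinarith [cosh_pos u])
      _ ≤ _ := cosh_pow_mul_exp_le (m + 1) (half_pos ht) (le_of_lt hu)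
  · refine ae_of_all _ fun u x _ => ?_
    refine (((hasDerivAt_neg x).mul_const (cosh u)).exp.const_mul (cosh u ^ m)).congr_deriv ?_
    ring

lemma coshMoment_le_exp_sub_mul {s : ℝ} (hs : 0 < s) (hst : s ≤ t) :
    coshMoment m t ≤ exp (s - t) * coshMoment m s := by
  rw [coshMoment, coshMoment, ← integral_const_mul]
  refine setIntegral_mono_on (integrableOn_cosh_pow_mul_exp m (hs.trans_le hst))
    ((integrableOn_cosh_pow_mul_exp m hs).const_mul _) measurableSet_Ioi fun u _ => ?_
  rw [mul_left_comm, ← exp_add]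
  gcongr cosh u ^ m * exp ?_
  nlinarith [one_le_cosh u]

lemma tendsto_pow_mul_coshMoment_atTop (k : ℕ) :
    Tendsto (fun t => t ^ k * coshMoment m t) atTop (𝓝 0) := by
  have hdecay : Tendsto (fun t => exp 1 * coshMoment m 1 * (t ^ k * exp (-t))) atTop (𝓝 0) := by
    simpa using (tendsto_pow_mul_exp_neg_atTop_nhds_zero k).const_mul (exp 1 * coshMoment m 1)
  refine squeeze_zero' ?_ ?_ hdecay
  · filter_upwards [eventually_ge_atTop 0] with t ht
    exact mul_nonneg (pow_nonneg ht k) (coshMoment_nonneg m)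
  · filter_upwards [eventually_ge_atTop 1] with t ht
    calc t ^ k * coshMoment m t ≤ t ^ k * (exp (1 - t) * coshMoment m 1) := by
          gcongr
          exact coshMoment_le_exp_sub_mul m one_pos ht
      _ = exp 1 * coshMoment m 1 * (t ^ k * exp (-t)) := by
          rw [sub_eq_add_neg, exp_add]; ring

/-- Integration by parts against `d/du [sinh u · e^{-t cosh u}]`. -/
lemma coshMoment_two (ht : 0 < t) : coshMoment 2 t = coshMoment 0 t + coshMoment 1 t / t := by
  set F : ℕ → ℝ → ℝ := fun n u => cosh u ^ n * exp (-t * cosh u)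
  have hderiv : ∀ u ∈ Ici (0 : ℝ), HasDerivAt (fun u => sinh u * exp (-t * cosh u))
      (F 1 u + t * F 0 u - t * F 2 u) u := fun u _ => by
    refine ((hasDerivAt_sinh u).mul ((hasDerivAt_cosh u).const_mul (-t)).exp).congr_deriv ?_
    linear_combination (t * exp (-t * cosh u)) * cosh_sq' u
  have hint (n : ℕ) : IntegrableOn (F n) (Ioi 0) := integrableOn_cosh_pow_mul_exp n ht
  have hlim : Tendsto (fun u => sinh u * exp (-t * cosh u)) atTop (𝓝 0) := by
    have hdecay : Tendsto (fun u => 1 ! * (2 / t) ^ 1 * exp (-(t / 2) * u)) atTop (𝓝 0) := by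
      simpa using (tendsto_exp_atBot.comp
        (tendsto_id.const_mul_atTop_of_neg (neg_neg_iff_pos.2 (half_pos ht)))).const_mul (2 / t)
    refine squeeze_zero_norm' ?_ hdecay
    filter_upwards [eventually_ge_atTop 0] with u hu
    rw [norm_mul, norm_of_nonneg (exp_pos _).le, Real.norm_eq_abs]
    calc |sinh u| * exp (-t * cosh u) ≤ cosh u ^ 1 * exp (-t * cosh u) := by
          rw [pow_one]; gcongr; exact abs_sinh_le_cosh u
      _ ≤ _ := cosh_pow_mul_exp_le 1 ht hu
  have hibp := integral_Ioi_of_hasDerivAt_of_tendsto' hderiv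
    (((hint 1).add ((hint 0).const_mul t)).sub ((hint 2).const_mul t)) hlim
  rw [integral_sub (by exact (hint 1).add ((hint 0).const_mul t)) (by exact (hint 2).const_mul t),
    integral_add (hint 1) (by exact (hint 0).const_mul t), integral_const_mul, integral_const_mul,
    sinh_zero, zero_mul, sub_zero] at hibp
  change coshMoment 1 t + t * coshMoment 0 t - t * coshMoment 2 t = 0 at hibp
  field_simp
  linarith

/-- Split at `A = log (2 / t)`: the integrand is at most `1` before `A` and at most `e^{A - 1 - u}`
after it, because `t cosh u ≥ t eᵘ / 2 = e^{u - A}`. -/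
lemma coshMoment_zero_le (ht : 0 < t) (ht2 : t ≤ 2) : coshMoment 0 t ≤ log (2 / t) + 1 := by
  set A := log (2 / t)
  have hA : 0 ≤ A := log_nonneg (by rw [le_div_iff₀ ht]; linarith)
  have hexpA : exp A = 2 / t := exp_log (by positivity)
  have hint := integrableOn_cosh_pow_mul_exp 0 ht
  rw [coshMoment, ← Ioc_union_Ioi_eq_Ioi hA, setIntegral_union (Ioc_disjoint_Ioi le_rfl)
    measurableSet_Ioi (hint.mono_set Ioc_subset_Ioi_self) (hint.mono_set (Ioi_subset_Ioi hA))]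
  have hnear : ∫ u in Ioc 0 A, cosh u ^ 0 * exp (-t * cosh u) ≤ A := by
    refine (setIntegral_mono_on (hint.mono_set Ioc_subset_Ioi_self)
      (integrableOn_const (C := 1) (by simp)) measurableSet_Ioc fun u _ => ?_).trans_eq
      (by simp [hA])
    rw [pow_zero, one_mul, exp_le_one_iff]
    nlinarith [cosh_pos u]
  have hfar : ∫ u in Ioi A, cosh u ^ 0 * exp (-t * cosh u) ≤ 1 := by
    have hdom : IntegrableOn (fun u => exp (A - 1) * exp (-u)) (Ioi A) := by
      have h := (exp_neg_integrableOn_Ioi A one_pos).const_mul (exp (A - 1))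
      simp only [neg_mul, one_mul] at h
      exact h
    calc ∫ u in Ioi A, cosh u ^ 0 * exp (-t * cosh u)
        ≤ ∫ u in Ioi A, exp (A - 1) * exp (-u) := by
          refine setIntegral_mono_on (hint.mono_set (Ioi_subset_Ioi hA)) hdom measurableSet_Ioi
            fun u _ => ?_
          have hcosh : exp (u - A) ≤ t * cosh u := by
            rw [exp_sub, hexpA, cosh_eq]
            field_simp
            nlinarith [exp_pos (-u)]
          rw [pow_zero, one_mul, ← exp_add, exp_le_exp]
          linarith [add_one_le_exp (u - A)]
      _ = exp (-1) := by rw [integral_const_mul, integral_exp_neg_Ioi, ← exp_add]; ring_nf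
      _ ≤ 1 := exp_le_one_iff.2 (by norm_num)
  linarith

/-- The substitution `v = t sinh u`. -/
lemma mul_coshMoment_one (ht : 0 < t) :
    t * coshMoment 1 t = ∫ v in Ioi 0, exp (-√(t ^ 2 + v ^ 2)) := by
  have himage : (fun u => t * sinh u) '' Ioi 0 = Ioi 0 := by
    ext v
    refine ⟨?_, fun hv => ⟨arsinh (v / t), arsinh_pos_iff.2 (div_pos hv ht), ?_⟩⟩
    · rintro ⟨u, hu, rfl⟩
      exact mul_pos ht (sinh_pos_iff.2 hu)
    · simp only [sinh_arsinh]
      field_simp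
  have hinj : InjOn (fun u => t * sinh u) (Ioi 0) := fun a _ b _ hab =>
    sinh_injective (mul_left_cancel₀ ht.ne' hab)
  have hsubst := integral_image_eq_integral_abs_deriv_smul measurableSet_Ioi
    (fun u _ => ((hasDerivAt_sinh u).const_mul t).hasDerivWithinAt) hinj
    (fun v => exp (-√(t ^ 2 + v ^ 2)))
  rw [himage] at hsubst
  rw [hsubst, coshMoment, ← integral_const_mul]
  refine setIntegral_congr_fun measurableSet_Ioi fun u _ => ?_
  have hsq : t ^ 2 + (t * sinh u) ^ 2 = (t * cosh u) ^ 2 := by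
    linear_combination t ^ 2 * (cosh_sq' u).symm
  rw [smul_eq_mul, hsq, sqrt_sq (by positivity), abs_of_pos (by positivity), pow_one, neg_mul]
  ring

lemma tendsto_mul_coshMoment_one : Tendsto (fun t => t * coshMoment 1 t) (𝓝[>] 0) (𝓝 1) := by
  have hdct : Tendsto (fun t => ∫ v in Ioi 0, exp (-√(t ^ 2 + v ^ 2))) (𝓝[>] 0)
      (𝓝 (∫ v in Ioi 0, exp (-v))) := by
    refine tendsto_integral_filter_of_dominated_convergence (fun v => exp (-v))
      (Eventually.of_forall fun _ => by fun_prop) (Eventually.of_forall fun t => ?_)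
      (by have h := exp_neg_integrableOn_Ioi 0 one_pos; simp only [neg_mul, one_mul] at h; exact h)
      ?_
    · filter_upwards [ae_restrict_mem measurableSet_Ioi] with v hv
      rw [norm_of_nonneg (exp_pos _).le, exp_le_exp, neg_le_neg_iff]
      exact le_sqrt_of_sq_le (by nlinarith)
    · filter_upwards [ae_restrict_mem measurableSet_Ioi] with v (hv : 0 < v)
      have := ((by fun_prop : Continuous fun t : ℝ => exp (-√(t ^ 2 + v ^ 2))).tendsto 0)
      rw [zero_pow two_ne_zero, zero_add, sqrt_sq hv.le] at this
      exact this.mono_left nhdsWithin_le_nhds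
  rw [integral_exp_neg_Ioi_zero] at hdct
  exact hdct.congr' (eventually_nhdsWithin_of_forall fun t ht => (mul_coshMoment_one ht).symm)

end coshMoment

section Bessel

variable {t : ℝ}

lemma K0_eq_coshMoment : K0 = coshMoment 0 := by
  funext t
  simp [K0, coshMoment]

lemma K1_eq_coshMoment (ht : 0 < t) : K1 t = coshMoment 1 t := by
  rw [K1, K0_eq_coshMoment, (hasDerivAt_coshMoment 0 ht).deriv, neg_neg]

lemma hasDerivAt_K0 (ht : 0 < t) : HasDerivAt K0 (-K1 t) t := by
  rw [K0_eq_coshMoment, K1_eq_coshMoment ht]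
  exact hasDerivAt_coshMoment 0 ht

lemma hasDerivAt_K1 (ht : 0 < t) : HasDerivAt K1 (-K0 t - K1 t / t) t := by
  have hK1 : K1 =ᶠ[𝓝 t] coshMoment 1 :=
    eventually_of_mem (Ioi_mem_nhds ht) fun _ hs => K1_eq_coshMoment hs
  rw [K0_eq_coshMoment, K1_eq_coshMoment ht, sub_eq_add_neg, ← neg_add, ← coshMoment_two ht]
  exact (hasDerivAt_coshMoment 1 ht).congr_of_eventuallyEq hK1

lemma tendsto_pow_mul_K0_atTop (k : ℕ) : Tendsto (fun t => t ^ k * K0 t) atTop (𝓝 0) := by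
  simpa only [K0_eq_coshMoment] using tendsto_pow_mul_coshMoment_atTop 0 k

lemma tendsto_pow_mul_K1_atTop (k : ℕ) : Tendsto (fun t => t ^ k * K1 t) atTop (𝓝 0) :=
  (tendsto_pow_mul_coshMoment_atTop 1 k).congr' <| by
    filter_upwards [eventually_gt_atTop 0] with t ht using by rw [K1_eq_coshMoment ht]

lemma K0_nonneg : 0 ≤ K0 t := K0_eq_coshMoment ▸ coshMoment_nonneg 0

lemma continuousOn_K0 : ContinuousOn K0 (Ioi 0) :=
  fun _ ht => (hasDerivAt_K0 ht).continuousAt.continuousWithinAt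

lemma K0_pow_le (ht : 0 < t) (ht2 : t ≤ 2) (b : ℕ) : K0 t ^ b ≤ b ! * (2 * exp 1) / t := by
  have hlog : 0 ≤ log (2 / t) := log_nonneg (by rw [le_div_iff₀ ht]; linarith)
  calc K0 t ^ b ≤ (log (2 / t) + 1) ^ b := by
        gcongr
        · exact K0_nonneg
        · exact K0_eq_coshMoment ▸ coshMoment_zero_le ht ht2
    _ ≤ b ! * exp (log (2 / t) + 1) := pow_le_factorial_mul_exp (by positivity) b
    _ = b ! * (2 * exp 1) / t := by
        rw [exp_add, exp_log (by positivity)]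
        ring

lemma tendsto_sq_mul_K0_pow_nhdsGT (b : ℕ) :
    Tendsto (fun t => t ^ 2 * K0 t ^ b) (𝓝[>] 0) (𝓝 0) := by
  have hlin : Tendsto (fun t : ℝ => b ! * (2 * exp 1) * t) (𝓝[>] 0) (𝓝 0) := by
    simpa using ((continuous_const_mul (b ! * (2 * exp 1))).tendsto 0).mono_left
      nhdsWithin_le_nhds
  refine squeeze_zero' (Eventually.of_forall fun t => by positivity [K0_nonneg (t := t)]) ?_ hlin
  filter_upwards [Ioc_mem_nhdsGT (show (0 : ℝ) < 2 by norm_num)] with t ⟨ht, ht2⟩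
  calc t ^ 2 * K0 t ^ b ≤ t ^ 2 * (b ! * (2 * exp 1) / t) := by gcongr; exact K0_pow_le ht ht2 b
    _ = b ! * (2 * exp 1) * t := by field_simp

lemma tendsto_mul_K1_nhdsGT : Tendsto (fun t => t * K1 t) (𝓝[>] 0) (𝓝 1) :=
  tendsto_mul_coshMoment_one.congr' <| by
    filter_upwards [self_mem_nhdsWithin] with t ht using by rw [K1_eq_coshMoment ht]

lemma integrableOn_K0_pow_mul_pow {b n : ℕ} (hb : b ≠ 0) (hn : n ≠ 0) :
    IntegrableOn (fun t => K0 t ^ b * t ^ n) (Ioi 0) := by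
  have hcont : ContinuousOn (fun t => K0 t ^ b * t ^ n) (Ioi 0) :=
    (continuousOn_K0.pow b).mul (continuousOn_pow n)
  rw [← Ioc_union_Ioi_eq_Ioi zero_le_one]
  refine IntegrableOn.union ?_ ?_
  · refine Integrable.mono' (integrableOn_const (C := b ! * (2 * exp 1)) (by simp))
      ((hcont.mono Ioc_subset_Ioi_self).aestronglyMeasurable measurableSet_Ioc) ?_
    filter_upwards [ae_restrict_mem measurableSet_Ioc] with t ⟨ht, ht1⟩
    rw [norm_of_nonneg (by positivity [K0_nonneg (t := t)])]
    calc K0 t ^ b * t ^ n ≤ b ! * (2 * exp 1) / t * t := by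
          gcongr
          · exact K0_pow_le ht (by linarith) b
          · exact pow_le_of_le_one ht.le ht1 hn
      _ = b ! * (2 * exp 1) := div_mul_cancel₀ _ ht.ne'
  · obtain ⟨c, rfl⟩ := Nat.exists_eq_add_one_of_ne_zero hb
    have hgamma : IntegrableOn (fun t : ℝ => exp (-t) * t ^ n) (Ioi 1) := by
      refine ((GammaIntegral_convergent (s := n + 1) (by positivity)).mono_set
        (Ioi_subset_Ioi zero_le_one)).congr_fun (fun t _ => ?_) measurableSet_Ioi
      simp only [add_sub_cancel_right, rpow_natCast]
    refine Integrable.mono' (hgamma.const_mul (K0 1 ^ (c + 1) * exp 1))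
      ((hcont.mono (Ioi_subset_Ioi zero_le_one)).aestronglyMeasurable measurableSet_Ioi) ?_
    filter_upwards [ae_restrict_mem measurableSet_Ioi] with t (ht : 1 < t)
    have hdecay : K0 t ≤ exp (1 - t) * K0 1 :=
      K0_eq_coshMoment ▸ coshMoment_le_exp_sub_mul 0 one_pos ht.le
    have hle : K0 t ≤ K0 1 :=
      hdecay.trans (mul_le_of_le_one_left K0_nonneg (exp_le_one_iff.2 (by linarith)))
    rw [norm_of_nonneg (by positivity [K0_nonneg (t := t)])]
    calc K0 t ^ (c + 1) * t ^ n = K0 t ^ c * K0 t * t ^ n := by rw [pow_succ]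
      _ ≤ K0 1 ^ c * (exp (1 - t) * K0 1) * t ^ n := by
          gcongr
          · exact K0_nonneg
          · exact pow_nonneg K0_nonneg c
          · exact K0_nonneg
      _ = K0 1 ^ (c + 1) * exp 1 * (exp (-t) * t ^ n) := by
          rw [sub_eq_add_neg, exp_add, pow_succ]; ring

end Bessel

noncomputable def ikm055Primitive (t : ℝ) : ℝ :=
  8/45 * (t^2 * K0 t^5) + 4/9 * (t^3 * (K0 t^4 * K1 t)) + 8/9 * (t^4 * (K0 t^3 * K1 t^2))
    - 52/45 * (t^4 * K0 t^5) - 8/15 * (t^5 * K1 t^5) + 4/3 * (t^5 * (K0 t^2 * K1 t^3))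
    - t^5 * (K0 t^4 * K1 t)

lemma hasDerivAt_ikm055Primitive {t : ℝ} (ht : 0 < t) :
    HasDerivAt ikm055Primitive ((t^5 - 76/15 * t^3 + 16/45 * t) * K0 t^5) t := by
  have h0 := hasDerivAt_K0 ht
  have h1 := hasDerivAt_K1 ht
  have hP := ((((((((hasDerivAt_pow 2 t).mul (h0.pow 5)).const_mul (8/45)).add
    (((hasDerivAt_pow 3 t).mul ((h0.pow 4).mul h1)).const_mul (4/9))).add
    (((hasDerivAt_pow 4 t).mul ((h0.pow 3).mul (h1.pow 2))).const_mul (8/9))).sub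
    (((hasDerivAt_pow 4 t).mul (h0.pow 5)).const_mul (52/45))).sub
    (((hasDerivAt_pow 5 t).mul (h1.pow 5)).const_mul (8/15))).add
    (((hasDerivAt_pow 5 t).mul ((h0.pow 2).mul (h1.pow 3))).const_mul (4/3))).sub
    ((hasDerivAt_pow 5 t).mul ((h0.pow 4).mul h1))
  refine hP.congr_deriv ?_
  simp only [Pi.pow_apply, Pi.mul_apply]
  field_simp
  ring

lemma tendsto_ikm055Primitive_atTop : Tendsto ikm055Primitive atTop (𝓝 0) := by
  have hK0 := tendsto_pow_mul_K0_atTop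
  have hK1 := tendsto_pow_mul_K1_atTop
  have k0 : Tendsto K0 atTop (𝓝 0) := by simpa using hK0 0
  have k1 : Tendsto K1 atTop (𝓝 0) := by simpa using hK1 0
  have hlim := ((((((((hK0 2).mul (k0.pow 4)).const_mul (8/45)).add
    (((hK0 3).mul ((k0.pow 3).mul k1)).const_mul (4/9))).add
    (((hK0 4).mul ((k0.pow 2).mul (k1.pow 2))).const_mul (8/9))).sub
    (((hK0 4).mul (k0.pow 4)).const_mul (52/45))).sub
    (((hK1 5).mul (k1.pow 4)).const_mul (8/15))).add
    (((hK0 5).mul (k0.mul (k1.pow 3))).const_mul (4/3))).sub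
    ((hK0 5).mul ((k0.pow 3).mul k1))
  convert hlim using 1
  · funext t
    simp only [ikm055Primitive]
    ring
  · norm_num

/-- Only `-8/15 · (t K₁)⁵` survives at `0`: the other terms carry a factor `t² K₀ʲ`. -/
lemma tendsto_ikm055Primitive_nhdsGT : Tendsto ikm055Primitive (𝓝[>] 0) (𝓝 (-8/15)) := by
  have hK0 := tendsto_sq_mul_K0_pow_nhdsGT
  have hK1 := tendsto_mul_K1_nhdsGT
  have ht2 : Tendsto (fun t : ℝ => t ^ 2) (𝓝[>] 0) (𝓝 0) := by
    simpa using ((continuous_pow 2).tendsto (0 : ℝ)).mono_left nhdsWithin_le_nhds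
  have hlim := (((((((hK0 5).const_mul (8/45)).add
    (((hK0 4).mul hK1).const_mul (4/9))).add
    (((hK0 3).mul (hK1.pow 2)).const_mul (8/9))).sub
    (((hK0 5).mul ht2).const_mul (52/45))).sub
    ((hK1.pow 5).const_mul (8/15))).add
    (((hK0 2).mul (hK1.pow 3)).const_mul (4/3))).sub
    (((hK0 4).mul hK1).mul ht2)
  convert hlim using 1
  · funext t
    simp only [ikm055Primitive]
    ring
  · norm_num

theorem IKM055_relation :
    IKM 0 5 5 = (76/15) * IKM 0 5 3 - (16/45) * IKM 0 5 1 + 8/15 := by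
  have hIKM (n : ℕ) : IKM 0 5 n = ∫ t in Ioi 0, K0 t ^ 5 * t ^ n := by simp [IKM]
  have hint (n : ℕ) (hn : n ≠ 0) : IntegrableOn (fun t => K0 t ^ 5 * t ^ n) (Ioi 0) :=
    integrableOn_K0_pow_mul_pow (by norm_num) hn
  have h53 := (hint 5 (by norm_num)).sub ((hint 3 (by norm_num)).const_mul (76/15))
  have h531 := h53.add ((hint 1 one_ne_zero).const_mul (16/45))
  have hexpand : (fun t => (t^5 - 76/15 * t^3 + 16/45 * t) * K0 t^5) =
      fun t => K0 t ^ 5 * t ^ 5 - 76/15 * (K0 t ^ 5 * t ^ 3) + 16/45 * (K0 t ^ 5 * t ^ 1) := by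
    funext t
    ring
  have hftc := integral_Ioi_of_hasDerivAt_of_tendsto_nhdsGT
    (fun _ ht => hasDerivAt_ikm055Primitive ht) (hexpand ▸ h531)
    tendsto_ikm055Primitive_nhdsGT tendsto_ikm055Primitive_atTop
  rw [hexpand, integral_add (by exact h53) (by exact (hint 1 one_ne_zero).const_mul _),
    integral_sub (hint 5 (by norm_num)) (by exact (hint 3 (by norm_num)).const_mul _),
    integral_const_mul, integral_const_mul] at hftc
  rw [hIKM, hIKM, hIKM]
  linarith
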